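/- arXiv:2504.14383 — 2 statements merged into one kernel-verified Lean document; each statement's English description precedes it below -/
import Mathlib

section
/- In the graded-commutative F₂-algebra R = F₂[h₀, h₁, a, P]/(h₀h₁, h₁³, h₁a, a² + P h₀²) with |h₀| = (0,1), |h₁| = (1,1), |a| = (7,4), |P| = (8,4), the quotient ker(h₀)/im(h₁) is zero; that is, every element annihilated by multiplication by h₀ lies in the ideal generated by h₁. -/
/-!
Setting `h₁ = 0` kills the first three relations, so if `h₀ p` lies in the ideal then
`h₀ · p|_{h₁=0}` is a multiple of `a² + Ph₀²`. As `h₀` is prime and does not divide `a² + Ph₀²`,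
`p|_{h₁=0}` itself is such a multiple, hence `p ≡ p|_{h₁=0} ≡ 0` modulo `h₁` and the ideal.
-/

open MvPolynomial

/-- The defining ideal of the cohomology of classical `A(1)`:
variables `X 0 = h₀`, `X 1 = h₁`, `X 2 = a`, `X 3 = P`. -/
noncomputable def A1Ideal : Ideal (MvPolynomial (Fin 4) (ZMod 2)) :=
  Ideal.span {X 0 * X 1, (X 1) ^ 3, X 1 * X 2, (X 2) ^ 2 + X 3 * (X 0) ^ 2}

/-- The cohomology of classical `A(1)`:
`R = F₂[h₀,h₁,a,P]/(h₀h₁, h₁³, h₁a, a² + Ph₀²)`. -/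
noncomputable abbrev A1Cohomology : Type :=
  MvPolynomial (Fin 4) (ZMod 2) ⧸ A1Ideal

theorem MvPolynomial.X_dvd_sub_aeval_update_zero {R σ : Type*} [CommRing R] [DecidableEq σ]
    (i : σ) (p : MvPolynomial σ R) :
    X i ∣ p - aeval (Function.update (X : σ → MvPolynomial σ R) i 0) p := by
  have hcomp : (Ideal.Quotient.mkₐ R (Ideal.span {X i})).comp
      (aeval (Function.update (X : σ → MvPolynomial σ R) i 0)) =
      Ideal.Quotient.mkₐ R (Ideal.span {X i}) := by
    ext j
    by_cases h : j = i
    · simp [h]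
    · simp [Function.update_of_ne h]
  rw [← Ideal.mem_span_singleton, ← Ideal.Quotient.eq]
  exact (DFunLike.congr_fun hcomp p).symm

theorem A1Ideal_le_comap_aeval_update_one :
    A1Ideal ≤ (Ideal.span {X 2 ^ 2 + X 3 * X 0 ^ 2}).comap
      (aeval (Function.update (X : Fin 4 → MvPolynomial (Fin 4) (ZMod 2)) 1 0)) := by
  refine Ideal.span_le.mpr ?_
  simp [Set.insert_subset_iff, Function.update_of_ne]

theorem not_X_zero_dvd_X_two_sq_add :
    ¬ (X 0 : MvPolynomial (Fin 4) (ZMod 2)) ∣ X 2 ^ 2 + X 3 * X 0 ^ 2 := by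
  intro h
  have h2 : (X 0 : MvPolynomial (Fin 4) (ZMod 2)) ∣ X 2 ^ 2 :=
    (dvd_add_left (dvd_mul_of_dvd_right (dvd_pow_self _ two_ne_zero) _)).mp h
  exact absurd (X_dvd_X.mp (X_prime.dvd_of_dvd_pow h2)) (by decide)

theorem exists_eq_X_one_mul_add_of_X_zero_mul_mem {p : MvPolynomial (Fin 4) (ZMod 2)}
    (hp : X 0 * p ∈ A1Ideal) :
    ∃ g e, p = X 1 * g + (X 2 ^ 2 + X 3 * X 0 ^ 2) * e := by
  set κ := aeval (R := ZMod 2) (Function.update (X : Fin 4 → MvPolynomial (Fin 4) (ZMod 2)) 1 0)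
  obtain ⟨d, hd⟩ : X 2 ^ 2 + X 3 * X 0 ^ 2 ∣ X 0 * κ p := by
    have := A1Ideal_le_comap_aeval_update_one hp
    rwa [Ideal.mem_comap, Ideal.mem_span_singleton, map_mul, aeval_X,
      Function.update_of_ne (by decide)] at this
  obtain ⟨e, rfl⟩ : (X 0 : MvPolynomial (Fin 4) (ZMod 2)) ∣ d :=
    (X_prime.dvd_or_dvd (Dvd.intro _ hd)).resolve_left not_X_zero_dvd_X_two_sq_add
  have hκp : κ p = (X 2 ^ 2 + X 3 * X 0 ^ 2) * e :=
    mul_left_cancel₀ (X_ne_zero 0) (by rw [hd]; ring)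
  obtain ⟨g, hg⟩ := X_dvd_sub_aeval_update_zero 1 p
  exact ⟨g, e, by rw [← hκp, ← hg]; ring⟩

/-- In `R = F₂[h₀,h₁,a,P]/(h₀h₁, h₁³, h₁a, a² + Ph₀²)`, the quotient
`ker(h₀)/im(h₁)` vanishes: every element annihilated by `h₀` is a multiple of `h₁`. -/
theorem ker_h0_eq_im_h1 (x : A1Cohomology)
    (hx : Ideal.Quotient.mk A1Ideal (X 0) * x = 0) :
    ∃ y : A1Cohomology, x = Ideal.Quotient.mk A1Ideal (X 1) * y := by
  obtain ⟨p, rfl⟩ := Ideal.Quotient.mk_surjective x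
  rw [← map_mul, Ideal.Quotient.eq_zero_iff_mem] at hx
  obtain ⟨g, e, rfl⟩ := exists_eq_X_one_mul_add_of_X_zero_mul_mem hx
  have hrel : Ideal.Quotient.mk A1Ideal (X 2 ^ 2 + X 3 * X 0 ^ 2) = 0 :=
    Ideal.Quotient.eq_zero_iff_mem.mpr (Ideal.subset_span (by simp))
  exact ⟨Ideal.Quotient.mk A1Ideal g, by rw [map_add, map_mul, map_mul, hrel, zero_mul, add_zero]⟩
end

section
/- In the E₂-page of the Burklund–Xu spectral sequence for ℂ-motivic A(2) in Chow degree one, described as q₀·coker(h₀) ⊕ q₁·(ker h₀/im h₁) ⊕ q₂·ker(h₁) over R = F₂[h₀,h₁,a,P]/(h₀h₁, h₁³, h₁a, a²+Ph₀²), the middle summand vanishes and the outer summands are q₀·F₂[h₁,a,P]/(h₁³,h₁a,a²) and q₂·(h₀·F₂[h₀,P] ⊕ h₁²·F₂[P] ⊕ a·F₂[h₀,P]). -/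
open MvPolynomial

noncomputable def h₀ : A1Cohomology := Ideal.Quotient.mk A1Ideal (X 0)
noncomputable def h₁ : A1Cohomology := Ideal.Quotient.mk A1Ideal (X 1)
noncomputable def aElem : A1Cohomology := Ideal.Quotient.mk A1Ideal (X 2)
noncomputable def PElem : A1Cohomology := Ideal.Quotient.mk A1Ideal (X 3)

/-- The target ring `F₂[h₁,a,P]/(h₁³, h₁a, a²)`: variables `X 0 = h₁`, `X 1 = a`,
`X 2 = P`. -/
noncomputable def cokerIdeal : Ideal (MvPolynomial (Fin 3) (ZMod 2)) :=
  Ideal.span {(X 0) ^ 3, X 0 * X 1, (X 1) ^ 2}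

/-!
Reducing monomials with the relations `h₀h₁ = 0`, `h₁³ = 0`, `h₁a = 0`, `a² = Ph₀²` writes
every element of `R` as `h₀ f(h₀,P) + c(P) + a g(h₀,P) + h₁ c₁(P) + h₁² c₂(P)`. These
coefficients are detected by two quotients of `R`: killing `h₁` gives `F₂[h₀,P][a]/(a² + Ph₀²)`,
free on `1, a` over `F₂[h₀,P]`, and killing `h₀, a` gives `F₂[P][h₁]/(h₁³)`, free on
`1, h₁, h₁²` over `F₂[P]`. Multiplication by `h₀` (resp. `h₁`) only involves the first (resp.
second) quotient, so the kernels of `h₀` and `h₁` can be read off the normal form. Part (i) is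
the presentation obtained by setting `h₀ = 0` in the relations.
-/

theorem AdjoinRoot.eq_zero_of_mk_eq_zero {R : Type*} [CommRing R] [NoZeroDivisors R]
    {f p : Polynomial R} (h : AdjoinRoot.mk f p = 0) (hp : p.degree < f.degree) : p = 0 :=
  Polynomial.eq_zero_of_dvd_of_degree_lt (AdjoinRoot.mk_eq_zero.mp h) hp

theorem AlgHom.map_eq_zero_of_mem_span {R A B : Type*} [CommSemiring R] [CommRing A] [Ring B]
    [Algebra R A] [Algebra R B] (f : A →ₐ[R] B) {s : Set A} (hs : ∀ x ∈ s, f x = 0) {a : A}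
    (ha : a ∈ Ideal.span s) : f a = 0 :=
  (Ideal.span_le (I := RingHom.ker f)).mpr hs ha

namespace A1Cohomology

section lift

variable {B : Type*} [CommRing B] [Algebra (ZMod 2) B] (v : Fin 4 → B)

noncomputable def lift (hv₀₁ : v 0 * v 1 = 0) (hv₁ : v 1 ^ 3 = 0) (hv₁₂ : v 1 * v 2 = 0)
    (hv₂ : v 2 ^ 2 + v 3 * v 0 ^ 2 = 0) : A1Cohomology →ₐ[ZMod 2] B :=
  Ideal.Quotient.liftₐ A1Ideal (aeval v) fun _ hp ↦
    (aeval v).map_eq_zero_of_mem_span (by rintro _ (rfl | rfl | rfl | rfl) <;> simpa) hp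

variable (hv₀₁ : v 0 * v 1 = 0) (hv₁ : v 1 ^ 3 = 0) (hv₁₂ : v 1 * v 2 = 0)
  (hv₂ : v 2 ^ 2 + v 3 * v 0 ^ 2 = 0)

@[simp]
theorem lift_mk (p : MvPolynomial (Fin 4) (ZMod 2)) :
    lift v hv₀₁ hv₁ hv₁₂ hv₂ (Ideal.Quotient.mk A1Ideal p) = aeval v p := rfl

@[simp] theorem lift_h₀ : lift v hv₀₁ hv₁ hv₁₂ hv₂ h₀ = v 0 := by simp [h₀]
@[simp] theorem lift_h₁ : lift v hv₀₁ hv₁ hv₁₂ hv₂ h₁ = v 1 := by simp [h₁]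
@[simp] theorem lift_aElem : lift v hv₀₁ hv₁ hv₁₂ hv₂ aElem = v 2 := by simp [aElem]
@[simp] theorem lift_PElem : lift v hv₀₁ hv₁ hv₁₂ hv₂ PElem = v 3 := by simp [PElem]

end lift

theorem h₀_mul_h₁ : h₀ * h₁ = 0 := by
  rw [h₀, h₁, ← map_mul, Ideal.Quotient.eq_zero_iff_mem]
  exact Ideal.subset_span (by simp)

theorem h₁_pow_three : h₁ ^ 3 = 0 := by
  rw [h₁, ← map_pow, Ideal.Quotient.eq_zero_iff_mem]
  exact Ideal.subset_span (by simp)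

theorem h₁_mul_aElem : h₁ * aElem = 0 := by
  rw [h₁, aElem, ← map_mul, Ideal.Quotient.eq_zero_iff_mem]
  exact Ideal.subset_span (by simp)

theorem aElem_sq : aElem ^ 2 = PElem * h₀ ^ 2 := by
  rw [← sub_eq_zero, aElem, PElem, h₀, ← map_pow, ← map_pow, ← map_mul, ← map_sub,
    Ideal.Quotient.eq_zero_iff_mem, CharTwo.sub_eq_add]
  exact Ideal.subset_span (by simp)

local notation "ι" => MvPolynomial.aeval (R := ZMod 2) ![h₀, PElem]
local notation "ιP" => Polynomial.aeval PElem

@[simp] theorem ι_X_zero : ι (X 0) = h₀ := by simp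
@[simp] theorem ι_X_one : ι (X 1) = PElem := by simp

@[simp]
theorem ι_aeval_X_one (c : Polynomial (ZMod 2)) : ι (Polynomial.aeval (X 1) c) = ιP c := by
  rw [← Polynomial.aeval_algHom_apply, ι_X_one]

theorem exists_normal_form (x : A1Cohomology) :
    ∃ (f g : MvPolynomial (Fin 2) (ZMod 2)) (c c₁ c₂ : Polynomial (ZMod 2)),
      x = h₀ * ι f + ιP c + aElem * ι g + h₁ * ιP c₁ + h₁ ^ 2 * ιP c₂ := by
  obtain ⟨p, rfl⟩ := Ideal.Quotient.mk_surjective x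
  induction p using MvPolynomial.induction_on with
  | C a =>
    refine ⟨0, 0, Polynomial.C a, 0, 0, ?_⟩
    simp only [map_zero, mul_zero, Polynomial.aeval_C, zero_add, add_zero]
    rfl
  | add p q hp hq =>
    obtain ⟨f, g, c, c₁, c₂, hp⟩ := hp
    obtain ⟨f', g', c', c₁', c₂', hq⟩ := hq
    refine ⟨f + f', g + g', c + c', c₁ + c₁', c₂ + c₂', ?_⟩
    simp only [map_add]
    linear_combination hp + hq
  | mul_X p i hp =>
    obtain ⟨f, g, c, c₁, c₂, hp⟩ := hp
    rw [map_mul]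
    fin_cases i
    · refine ⟨X 0 * f + Polynomial.aeval (X 1) c, X 0 * g, 0, 0, 0, ?_⟩
      change _ * h₀ = _
      simp only [map_add, map_mul, ι_X_zero, ι_aeval_X_one, map_zero]
      linear_combination h₀ * hp + (ιP c₁ + h₁ * ιP c₂) * h₀_mul_h₁
    · refine ⟨0, 0, 0, c, c₁, ?_⟩
      change _ * h₁ = _
      simp only [map_zero]
      linear_combination h₁ * hp + ι f * h₀_mul_h₁ + ι g * h₁_mul_aElem + ιP c₂ * h₁_pow_three
    · refine ⟨X 1 * X 0 * g, X 0 * f + Polynomial.aeval (X 1) c, 0, 0, 0, ?_⟩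
      change _ * aElem = _
      simp only [map_add, map_mul, ι_X_zero, ι_X_one, ι_aeval_X_one, map_zero]
      linear_combination aElem * hp + ι g * aElem_sq + (ιP c₁ + h₁ * ιP c₂) * h₁_mul_aElem
    · refine ⟨X 1 * f, X 1 * g, Polynomial.X * c, Polynomial.X * c₁, Polynomial.X * c₂, ?_⟩
      change _ * PElem = _
      simp only [map_mul, ι_X_one, Polynomial.aeval_X]
      linear_combination PElem * hp

/- `a² + Ph₀²` as a polynomial in `a` over `F₂[h₀, P]`, with `X 0 = h₀` and `X 1 = P`. The two
moduli are definitions so that rewriting in `AdjoinRoot aRel` never touches the type. -/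
noncomputable def aRel : Polynomial (MvPolynomial (Fin 2) (ZMod 2)) :=
  Polynomial.X ^ 2 + Polynomial.C (X 1 * X 0 ^ 2)

noncomputable def h₁Rel : Polynomial (Polynomial (ZMod 2)) := Polynomial.X ^ 3

noncomputable def modH₁ : A1Cohomology →ₐ[ZMod 2] AdjoinRoot aRel :=
  lift (![AdjoinRoot.of aRel (X 0), 0, AdjoinRoot.root aRel, AdjoinRoot.of aRel (X 1)] :
      Fin 4 → AdjoinRoot aRel)
    (by simp) (by simp) (by simp) <| by
      simp only [Matrix.cons_val]
      rw [← map_pow, ← map_mul, ← AdjoinRoot.mk_C, ← AdjoinRoot.mk_X, ← map_pow, ← map_add]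
      exact AdjoinRoot.mk_self (f := aRel)

noncomputable def modH₀A : A1Cohomology →ₐ[ZMod 2] AdjoinRoot h₁Rel :=
  lift (![0, AdjoinRoot.root h₁Rel, 0, AdjoinRoot.of h₁Rel Polynomial.X] : Fin 4 → AdjoinRoot h₁Rel)
    (by simp)
    (by
      simp only [Matrix.cons_val]
      rw [← AdjoinRoot.mk_X, ← map_pow]
      exact AdjoinRoot.mk_self (f := h₁Rel))
    (by simp) (by simp)

theorem modH₁_ι (s : MvPolynomial (Fin 2) (ZMod 2)) : modH₁ (ι s) = AdjoinRoot.of aRel s := by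
  have : modH₁.comp ι = IsScalarTower.toAlgHom (ZMod 2) _ _ :=
    MvPolynomial.algHom_ext fun i ↦ by fin_cases i <;> simp [modH₁]
  exact congr($this s)

theorem modH₁_aElem : modH₁ aElem = AdjoinRoot.root aRel := by simp [modH₁]

theorem modH₀A_ιP (c : Polynomial (ZMod 2)) : modH₀A (ιP c) = AdjoinRoot.of h₁Rel c := by
  rw [← Polynomial.aeval_algHom_apply]
  simp [modH₀A, ← AdjoinRoot.algebraMap_eq, Polynomial.aeval_algebraMap_apply]

theorem modH₀A_h₁ : modH₀A h₁ = AdjoinRoot.root h₁Rel := by simp [modH₀A]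

theorem eq_zero_of_ι_add_aElem_mul_ι_eq_zero {s₀ s₁ : MvPolynomial (Fin 2) (ZMod 2)}
    (h : ι s₀ + aElem * ι s₁ = 0) : s₀ = 0 ∧ s₁ = 0 := by
  have hmk : AdjoinRoot.mk aRel (Polynomial.C s₁ * Polynomial.X + Polynomial.C s₀) = 0 := by
    have h' := congr(modH₁ $h)
    rw [map_add, map_mul, modH₁_ι, modH₁_ι, modH₁_aElem, map_zero] at h'
    simp only [map_add, map_mul, AdjoinRoot.mk_C, AdjoinRoot.mk_X]
    linear_combination h'
  have hp := AdjoinRoot.eq_zero_of_mk_eq_zero hmk <| by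
    rw [aRel, Polynomial.degree_X_pow_add_C two_pos]
    exact Polynomial.degree_linear_le.trans_lt (by norm_num)
  exact ⟨by simpa using congr(Polynomial.coeff $hp 0), by simpa using congr(Polynomial.coeff $hp 1)⟩

theorem eq_zero_of_h₁_mul_add_h₁_sq_mul_eq_zero {c₁ c₂ : Polynomial (ZMod 2)}
    (h : h₁ * ιP c₁ + h₁ ^ 2 * ιP c₂ = 0) : c₁ = 0 ∧ c₂ = 0 := by
  have hmk : AdjoinRoot.mk h₁Rel
      (Polynomial.C c₂ * Polynomial.X ^ 2 + Polynomial.C c₁ * Polynomial.X + Polynomial.C 0) =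
        0 := by
    have h' := congr(modH₀A $h)
    rw [map_add, map_mul, map_mul, map_pow, modH₀A_ιP, modH₀A_ιP, modH₀A_h₁, map_zero] at h'
    simp only [map_add, map_mul, map_pow, AdjoinRoot.mk_C, AdjoinRoot.mk_X, map_zero]
    linear_combination h'
  have hp := AdjoinRoot.eq_zero_of_mk_eq_zero hmk <| by
    rw [h₁Rel, Polynomial.degree_X_pow]
    exact Polynomial.degree_quadratic_le.trans_lt (by norm_num)
  exact ⟨by simpa using congr(Polynomial.coeff $hp 1), by simpa using congr(Polynomial.coeff $hp 2)⟩

theorem exists_eq_h₁_mul_of_h₀_mul_eq_zero {x : A1Cohomology} (hx : h₀ * x = 0) :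
    ∃ y, x = h₁ * y := by
  obtain ⟨f, g, c, c₁, c₂, rfl⟩ := exists_normal_form x
  have h : ι (X 0 * (X 0 * f + Polynomial.aeval (X 1) c)) + aElem * ι (X 0 * g) = 0 := by
    simp only [map_add, map_mul, ι_X_zero, ι_aeval_X_one]
    linear_combination hx - (ιP c₁ + h₁ * ιP c₂) * h₀_mul_h₁
  obtain ⟨hf, hg⟩ := eq_zero_of_ι_add_aElem_mul_ι_eq_zero h
  have hf : h₀ * ι f + ιP c = 0 := by
    simpa using congr(ι $((mul_eq_zero.mp hf).resolve_left (X_ne_zero 0)))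
  rw [(mul_eq_zero.mp hg).resolve_left (X_ne_zero 0)]
  exact ⟨ιP c₁ + h₁ * ιP c₂, by simp only [map_zero]; linear_combination hf⟩

theorem h₁_mul_eq_zero_iff (x : A1Cohomology) :
    h₁ * x = 0 ↔ ∃ (f g : MvPolynomial (Fin 2) (ZMod 2)) (u : Polynomial (ZMod 2)),
      x = h₀ * ι f + h₁ ^ 2 * ιP u + aElem * ι g := by
  constructor
  · intro hx
    obtain ⟨f, g, c, c₁, c₂, rfl⟩ := exists_normal_form x
    obtain ⟨rfl, rfl⟩ := eq_zero_of_h₁_mul_add_h₁_sq_mul_eq_zero (c₁ := c) (c₂ := c₁) <| by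
      linear_combination hx - ι f * h₀_mul_h₁ - ι g * h₁_mul_aElem - ιP c₂ * h₁_pow_three
    exact ⟨f, g, c₂, by simp only [map_zero]; ring⟩
  · rintro ⟨f, g, u, rfl⟩
    linear_combination ι f * h₀_mul_h₁ + ιP u * h₁_pow_three + ι g * h₁_mul_aElem

theorem A1Ideal_le_comap_cokerIdeal :
    A1Ideal ≤ cokerIdeal.comap (aeval ![0, X 0, X 1, X 2]) := by
  refine Ideal.span_le.mpr ?_
  rintro _ (rfl | rfl | rfl | rfl) <;> simp <;> exact Ideal.subset_span (by simp)

theorem cokerIdeal_le_comap_span_h₀ :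
    cokerIdeal ≤ (Ideal.span {h₀}).comap (aeval ![h₁, aElem, PElem]) := by
  refine Ideal.span_le.mpr ?_
  rintro _ (rfl | rfl | rfl)
  · simp [h₁_pow_three]
  · simp [h₁_mul_aElem]
  · simpa [aElem_sq] using Ideal.mul_mem_left _ PElem
      (Ideal.pow_mem_of_mem _ (Ideal.mem_span_singleton_self h₀) 2 two_pos)

noncomputable def toCoker :
    (A1Cohomology ⧸ Ideal.span {h₀}) →ₐ[ZMod 2] MvPolynomial (Fin 3) (ZMod 2) ⧸ cokerIdeal :=
  Ideal.Quotient.liftₐ _ (Ideal.quotientMapₐ _ _ A1Ideal_le_comap_cokerIdeal)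
    fun _ ↦ AlgHom.map_eq_zero_of_mem_span _ (by rintro _ rfl; simp [h₀])

noncomputable def ofCoker :
    (MvPolynomial (Fin 3) (ZMod 2) ⧸ cokerIdeal) →ₐ[ZMod 2] A1Cohomology ⧸ Ideal.span {h₀} :=
  Ideal.quotientMapₐ _ _ cokerIdeal_le_comap_span_h₀

theorem toCoker_mk (p : MvPolynomial (Fin 4) (ZMod 2)) :
    toCoker (Ideal.Quotient.mk _ (Ideal.Quotient.mk _ p)) =
      Ideal.Quotient.mk _ (aeval ![0, X 0, X 1, X 2] p) := rfl

theorem ofCoker_mk (p : MvPolynomial (Fin 3) (ZMod 2)) :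
    ofCoker (Ideal.Quotient.mk _ p) = Ideal.Quotient.mk _ (aeval ![h₁, aElem, PElem] p) := rfl

noncomputable def quotientSpanH₀Equiv :
    (A1Cohomology ⧸ Ideal.span {h₀}) ≃ₐ[ZMod 2] MvPolynomial (Fin 3) (ZMod 2) ⧸ cokerIdeal :=
  AlgEquiv.ofAlgHom toCoker ofCoker
    (Ideal.Quotient.algHom_ext _ <| MvPolynomial.algHom_ext fun i ↦ by
      simp only [AlgHom.comp_apply, Ideal.Quotient.mkₐ_eq_mk, AlgHom.id_apply, ofCoker_mk]
      fin_cases i <;> simp [h₁, aElem, PElem, toCoker_mk])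
    (Ideal.Quotient.algHom_ext _ <| Ideal.Quotient.algHom_ext _ <|
      MvPolynomial.algHom_ext fun i ↦ by
        simp only [AlgHom.comp_apply, Ideal.Quotient.mkₐ_eq_mk, AlgHom.id_apply, toCoker_mk,
          aeval_X]
        fin_cases i
        · exact (map_zero ofCoker).trans (Ideal.Quotient.mk_singleton_self h₀).symm
        all_goals simp [ofCoker_mk, h₁, aElem, PElem])

end A1Cohomology

/-- Identification of the Burklund–Xu `E₂`-page for ℂ-motivic `A(2)` in Chow degree
one: over `R = F₂[h₀,h₁,a,P]/(h₀h₁, h₁³, h₁a, a² + Ph₀²)`,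
(i) `coker(h₀) ≅ F₂[h₁,a,P]/(h₁³, h₁a, a²)`;
(ii) `ker(h₀)/im(h₁) = 0`, i.e. every `h₀`-torsion element is a multiple of `h₁`;
(iii) `ker(h₁) = h₀·F₂[h₀,P] ⊕ h₁²·F₂[P] ⊕ a·F₂[h₀,P]`. -/
theorem burklund_xu_E2_for_A2_chow_degree_one :
    Nonempty
      ((A1Cohomology ⧸ Ideal.span {h₀}) ≃ₐ[ZMod 2]
        (MvPolynomial (Fin 3) (ZMod 2) ⧸ cokerIdeal)) ∧
    (∀ x : A1Cohomology, h₀ * x = 0 → ∃ y : A1Cohomology, x = h₁ * y) ∧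
    (∀ x : A1Cohomology,
      h₁ * x = 0 ↔
        ∃ (f g : MvPolynomial (Fin 2) (ZMod 2)) (u : Polynomial (ZMod 2)),
          x = h₀ * (MvPolynomial.aeval ![h₀, PElem] f)
            + h₁ ^ 2 * (Polynomial.aeval PElem u)
            + aElem * (MvPolynomial.aeval ![h₀, PElem] g)) :=
  ⟨⟨A1Cohomology.quotientSpanH₀Equiv⟩, fun _ ↦ A1Cohomology.exists_eq_h₁_mul_of_h₀_mul_eq_zero,
    A1Cohomology.h₁_mul_eq_zero_iff⟩
end
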